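/- Let α = (I^g, α^g)_{g∈mor(𝒢)} be an associative partial action of a groupoid 𝒢 on an R-semicategory C. Suppose 𝒢₀ is finite and that for every x ∈ C₀ and every e ∈ 𝒢₀ ∩ 𝒢^x the ideal _xI^e_x has a local identity 1^e_x. Then the skew groupoid semicategory C∗_α𝒢 is an R-category: for each object x, the morphism u = Σ_{e∈𝒢₀∩𝒢^x} 1^e_x ∈ _x(C∗_α𝒢)_x satisfies fu = f and ug = g for all f ∈ _z(C∗_α𝒢)_x and g ∈ _x(C∗_α𝒢)_z. -/

import Mathlib

open scoped Classical

noncomputable section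

universe u u₂ v v' w w'

/-- A one-sorted (algebraic) groupoid: a set `G` of morphisms with a
partially defined multiplication (`comp g h` meaning `d g = r h`), a total
extension `mul` of it, and inversion. -/
structure AlgGroupoid (G : Type u₂) where
  mul : G → G → G
  inv : G → G
  comp : G → G → Prop
  comp_iff : ∀ g h, comp g h ↔ mul (inv g) g = mul h (inv h)
  mul_assoc' : ∀ g h k, comp g h → comp h k → mul (mul g h) k = mul g (mul h k)
  comp_mul_left : ∀ g h k, comp g h → comp h k → comp (mul g h) k
  comp_mul_right : ∀ g h k, comp g h → comp h k → comp g (mul h k)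
  inv_inv' : ∀ g, inv (inv g) = g
  comp_inv_left : ∀ g, comp (inv g) g
  comp_inv_right : ∀ g, comp g (inv g)
  inv_mul_cancel' : ∀ g h, comp g h → mul (inv g) (mul g h) = h
  mul_inv_cancel' : ∀ g h, comp g h → mul (mul g h) (inv h) = g
  inv_mul' : ∀ g h, comp g h → inv (mul g h) = mul (inv h) (inv g)

namespace AlgGroupoid

variable {G : Type u₂}

/-- The domain identity `d g = g⁻¹ g`. -/
def d (𝒢 : AlgGroupoid G) (g : G) : G := 𝒢.mul (𝒢.inv g) g

/-- The range identity `r g = g g⁻¹`. -/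
def r (𝒢 : AlgGroupoid G) (g : G) : G := 𝒢.mul g (𝒢.inv g)

/-- The set of identities `𝒢₀` of the groupoid. -/
def units (𝒢 : AlgGroupoid G) : Set G := {e | ∃ g, e = 𝒢.d g}

/-- A partial action of a groupoid `𝒢` on the subset `X` of the type `Y`:
the data is a family of domains `D g ⊆ X` and a (total extension of a)
family of maps `act g : D g⁻¹ → D g`. -/
def IsPartialActionOn {Y : Type v} (𝒢 : AlgGroupoid G)
    (X : Set Y) (D : G → Set Y) (act : G → Y → Y) : Prop :=
  (∀ g, D g ⊆ X) ∧
  (∀ g, D g ⊆ D (𝒢.r g)) ∧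
  (∀ x ∈ X, ∃ e ∈ 𝒢.units, x ∈ D e) ∧
  (∀ e ∈ 𝒢.units, ∀ x ∈ D e, act e x = x) ∧
  (∀ g, ∀ x ∈ D (𝒢.inv g), act g x ∈ D g) ∧
  (∀ g, ∀ x ∈ D (𝒢.inv g), act (𝒢.inv g) (act g x) = x) ∧
  (∀ g h, 𝒢.comp g h → act g '' (D (𝒢.inv g) ∩ D h) = D g ∩ D (𝒢.mul g h)) ∧
  (∀ g h, 𝒢.comp g h → ∀ x ∈ D (𝒢.inv h),
      act h x ∈ D (𝒢.inv g) ∩ D h → act g (act h x) = act (𝒢.mul g h) x)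

/-- A partial action of a groupoid on (all of) a set `Y`. -/
def IsSetPartialAction {Y : Type v} (𝒢 : AlgGroupoid G)
    (D : G → Set Y) (act : G → Y → Y) : Prop :=
  𝒢.IsPartialActionOn Set.univ D act

/-- A partial set action is global when `α_g ∘ α_h = α_{gh}` (as partially
defined maps) for every composable pair `(g, h)`. -/
def SetActionIsGlobal {Y : Type v} (𝒢 : AlgGroupoid G)
    (D : G → Set Y) (act : G → Y → Y) : Prop :=
  ∀ g h, 𝒢.comp g h →
    D (𝒢.inv (𝒢.mul g h)) = {x ∈ D (𝒢.inv h) | act h x ∈ D (𝒢.inv g)} ∧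
    ∀ x ∈ D (𝒢.inv (𝒢.mul g h)), act g (act h x) = act (𝒢.mul g h) x

end AlgGroupoid
/-- An `R`-semicategory with object type `Ob`: morphism `R`-modules
`Hom y x` (the morphisms *from `x` to `y`*, i.e. `_yC_x`) and an
associative `R`-bilinear composition (no identities required). -/
structure RSemicat (R : Type u) [CommRing R] (Ob : Type v) : Type (max u v (w + 1)) where
  Hom : Ob → Ob → Type w
  [homAdd : ∀ y x, AddCommGroup (Hom y x)]
  [homMod : ∀ y x, Module R (Hom y x)]
  comp : ∀ {z y x : Ob}, Hom z y → Hom y x → Hom z x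
  comp_assoc : ∀ {v z y x : Ob} (f : Hom v z) (g : Hom z y) (h : Hom y x),
      comp (comp f g) h = comp f (comp g h)
  comp_add_left : ∀ {z y x : Ob} (f f' : Hom z y) (g : Hom y x),
      comp (f + f') g = comp f g + comp f' g
  comp_add_right : ∀ {z y x : Ob} (f : Hom z y) (g g' : Hom y x),
      comp f (g + g') = comp f g + comp f g'
  comp_smul_left : ∀ {z y x : Ob} (c : R) (f : Hom z y) (g : Hom y x),
      comp (c • f) g = c • comp f g
  comp_smul_right : ∀ {z y x : Ob} (c : R) (f : Hom z y) (g : Hom y x),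
      comp f (c • g) = c • comp f g

attribute [instance] RSemicat.homAdd RSemicat.homMod

namespace RSemicat

variable {R : Type u} [CommRing R] {Ob : Type v}

theorem comp_zero_left (C : RSemicat.{u, v, w} R Ob) {z y x : Ob} (g : C.Hom y x) :
    C.comp (0 : C.Hom z y) g = 0 := by
  have h := C.comp_add_left (0 : C.Hom z y) 0 g
  rw [add_zero] at h
  exact left_eq_add.mp h

theorem comp_zero_right (C : RSemicat.{u, v, w} R Ob) {z y x : Ob} (f : C.Hom z y) :
    C.comp f (0 : C.Hom y x) = 0 := by
  have h := C.comp_add_right f (0 : C.Hom y x) 0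
  rw [add_zero] at h
  exact left_eq_add.mp h

/-- An ideal of an `R`-semicategory: a family of submodules closed under
composition with arbitrary morphisms on either side. -/
def IsIdeal (C : RSemicat R Ob) (I : ∀ y x : Ob, Submodule R (C.Hom y x)) : Prop :=
  (∀ (z y x : Ob) (u : C.Hom z y) (f : C.Hom y x), f ∈ I y x → C.comp u f ∈ I z x) ∧
  (∀ (z y x : Ob) (f : C.Hom z y) (u : C.Hom y x), f ∈ I z y → C.comp f u ∈ I z x)

/-- `J` is an ideal of the ideal `I`: `J ⊆ I` and `J` is closed under
composition with morphisms of `I` on either side. -/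
def IsIdealIn (C : RSemicat R Ob) (J I : ∀ y x : Ob, Submodule R (C.Hom y x)) : Prop :=
  (∀ y x, J y x ≤ I y x) ∧
  (∀ (z y x : Ob) (u : C.Hom z y) (f : C.Hom y x), u ∈ I z y → f ∈ J y x → C.comp u f ∈ J z x) ∧
  (∀ (z y x : Ob) (f : C.Hom z y) (u : C.Hom y x), f ∈ J z y → u ∈ I y x → C.comp f u ∈ J z x)

/-- `u ∈ _xI_x` is a local identity of the ideal `I` at the object `x`. -/
def IsLocalIdentity (C : RSemicat R Ob) (I : ∀ y x : Ob, Submodule R (C.Hom y x))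
    (x : Ob) (u : C.Hom x x) : Prop :=
  (∀ (y : Ob) (f : C.Hom x y), f ∈ I x y → C.comp u f = f) ∧
  (∀ (y : Ob) (f : C.Hom y x), f ∈ I y x → C.comp f u = f)

/-- `u ∈ _xI_x` is a left local identity of the ideal `I` at the object `x`. -/
def IsLeftLocalIdentity (C : RSemicat R Ob) (I : ∀ y x : Ob, Submodule R (C.Hom y x))
    (x : Ob) (u : C.Hom x x) : Prop :=
  ∀ (y : Ob) (f : C.Hom x y), f ∈ I x y → C.comp u f = f

/-- An `R`-semicategory is an `R`-category when every object has an
identity morphism. -/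
def HasIdentities (C : RSemicat R Ob) : Prop :=
  ∀ x : Ob, ∃ u : C.Hom x x,
    (∀ (y : Ob) (f : C.Hom x y), C.comp u f = f) ∧
    (∀ (y : Ob) (f : C.Hom y x), C.comp f u = f)

end RSemicat

/-- The raw data of a partial action of a groupoid (with morphism type `G`)
on an `R`-semicategory `C`: domains `D₀ g` and (total extensions of) maps
`act₀ g` on objects, a family of submodules `I g` (the ideals `I^g`) and
(total extensions of) maps `act g : I^{g⁻¹} → I^g` on morphisms. -/
structure SemicatActionData (R : Type u) [CommRing R] (G : Type u₂) {Ob : Type v}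
    (C : RSemicat.{u, v, w} R Ob) where
  D₀ : G → Set Ob
  act₀ : G → Ob → Ob
  I : G → ∀ y x : Ob, Submodule R (C.Hom y x)
  act : ∀ (g : G) {y x : Ob}, C.Hom y x → C.Hom (act₀ g y) (act₀ g x)

variable {R : Type u} [CommRing R] {G : Type u₂} {Ob : Type v}

/-- Definition of a partial action of a groupoid `𝒢` on an `R`-semicategory `C`. -/
def IsSemicatPartialAction (𝒢 : AlgGroupoid G) (C : RSemicat.{u, v, w} R Ob)
    (a : SemicatActionData R G C) : Prop :=
  -- (i) a partial action on the set of objects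
  𝒢.IsSetPartialAction a.D₀ a.act₀ ∧
  -- (ii) `_yI^g_x = 0` unless `{y, x} ⊆ C₀^g`
  (∀ (g : G) (y x : Ob), ¬(y ∈ a.D₀ g ∧ x ∈ a.D₀ g) → a.I g y x = ⊥) ∧
  -- `I^g ⊴ I^{r g} ⊴ C`
  (∀ g : G, C.IsIdealIn (a.I g) (a.I (𝒢.r g))) ∧
  (∀ g : G, C.IsIdeal (a.I (𝒢.r g))) ∧
  -- (iii) `α^g : I^{g⁻¹} → I^g` is an isomorphism of `R`-semicategories
  (∀ (g : G) (y x : Ob) (f : C.Hom y x), f ∈ a.I (𝒢.inv g) y x →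
      a.act g f ∈ a.I g (a.act₀ g y) (a.act₀ g x)) ∧
  (∀ (g : G) (y x : Ob) (f f' : C.Hom y x), f ∈ a.I (𝒢.inv g) y x →
      f' ∈ a.I (𝒢.inv g) y x → a.act g (f + f') = a.act g f + a.act g f') ∧
  (∀ (g : G) (y x : Ob) (c : R) (f : C.Hom y x), f ∈ a.I (𝒢.inv g) y x →
      a.act g (c • f) = c • a.act g f) ∧
  (∀ (g : G) (y x : Ob) (f f' : C.Hom y x), f ∈ a.I (𝒢.inv g) y x →
      f' ∈ a.I (𝒢.inv g) y x → a.act g f = a.act g f' → f = f') ∧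
  (∀ g : G, ∀ y ∈ a.D₀ (𝒢.inv g), ∀ x ∈ a.D₀ (𝒢.inv g),
      ∀ k ∈ a.I g (a.act₀ g y) (a.act₀ g x), ∃ f ∈ a.I (𝒢.inv g) y x, a.act g f = k) ∧
  (∀ (g : G) (z y x : Ob) (f : C.Hom z y) (f' : C.Hom y x), f ∈ a.I (𝒢.inv g) z y →
      f' ∈ a.I (𝒢.inv g) y x → a.act g (C.comp f f') = C.comp (a.act g f) (a.act g f')) ∧
  -- (iv) `α^e = id` on `I^e` for identities `e`
  (∀ e ∈ 𝒢.units, ∀ (y x : Ob) (f : C.Hom y x), f ∈ a.I e y x → HEq (a.act e f) f) ∧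
  -- (v)
  (∀ g h : G, 𝒢.comp g h → ∀ (y x : Ob) (f : C.Hom y x),
      f ∈ a.I h y x → f ∈ a.I (𝒢.inv g) y x →
      a.act (𝒢.inv h) f ∈
        a.I (𝒢.inv (𝒢.mul g h)) (a.act₀ (𝒢.inv h) y) (a.act₀ (𝒢.inv h) x)) ∧
  -- (vi) `α^g ∘ α^h = α^{gh}` on `α^{h⁻¹}(I^h ∩ I^{g⁻¹})`
  (∀ g h : G, 𝒢.comp g h → ∀ (y x : Ob) (f : C.Hom y x), f ∈ a.I (𝒢.inv h) y x →
      a.act h f ∈ a.I (𝒢.inv g) (a.act₀ h y) (a.act₀ h x) →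
      HEq (a.act g (a.act h f)) (a.act (𝒢.mul g h) f))

/-- A partial action of a groupoid on an `R`-semicategory is global when
`α^g ∘ α^h = α^{gh}` and `α₀^g ∘ α₀^h = α₀^{gh}` for every composable pair. -/
def SemicatActionIsGlobal (𝒢 : AlgGroupoid G) (C : RSemicat.{u, v, w} R Ob)
    (a : SemicatActionData R G C) : Prop :=
  𝒢.SetActionIsGlobal a.D₀ a.act₀ ∧
  ∀ g h : G, 𝒢.comp g h → ∀ (y x : Ob) (f : C.Hom y x),
    (f ∈ a.I (𝒢.inv (𝒢.mul g h)) y x ↔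
      f ∈ a.I (𝒢.inv h) y x ∧ a.act h f ∈ a.I (𝒢.inv g) (a.act₀ h y) (a.act₀ h x)) ∧
    (f ∈ a.I (𝒢.inv (𝒢.mul g h)) y x → HEq (a.act g (a.act h f)) (a.act (𝒢.mul g h) f))
section Skew

variable (𝒢 : AlgGroupoid G)

/-- The product of homogeneous components in the (possibly non-associative)
partial skew groupoid semicategory `C ∗_α 𝒢`:
for `f ∈ _zI^t_{ty}` and `l ∈ _yI^g_{gx}` the product is
`α^t(α^{t⁻¹}(f) ∘ l) ∈ _zI^{tg}_{(tg)x}` when `(t, g)` is composable and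
`x ∈ C₀^{(tg)⁻¹}`, and `0` otherwise. -/
def skewMul (C : RSemicat.{u, v, w} R Ob) (a : SemicatActionData R G C) (t g : G)
    {z y x : Ob} (f : C.Hom z (a.act₀ t y)) (l : C.Hom y (a.act₀ g x)) :
    C.Hom z (a.act₀ (𝒢.mul t g) x) :=
  if h : 𝒢.comp t g ∧ x ∈ a.D₀ (𝒢.inv (𝒢.mul t g)) ∧
      a.act₀ (𝒢.inv t) (a.act₀ t y) = y ∧ a.act₀ t (a.act₀ (𝒢.inv t) z) = z ∧
      a.act₀ t (a.act₀ g x) = a.act₀ (𝒢.mul t g) x then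
    cast (by rw [h.2.2.2.1, h.2.2.2.2])
      (a.act t (C.comp (cast (by rw [h.2.2.1]) (a.act (𝒢.inv t) f)) l))
  else 0

/-- Associativity of the partial skew groupoid semicategory `C ∗_α 𝒢`:
`(f l) k = f (l k)` on homogeneous components. -/
def SkewAssoc (C : RSemicat.{u, v, w} R Ob) (a : SemicatActionData R G C) : Prop :=
  ∀ (t g h : G) (z y x u : Ob),
    y ∈ a.D₀ (𝒢.inv t) → x ∈ a.D₀ (𝒢.inv g) → u ∈ a.D₀ (𝒢.inv h) →
    ∀ (f : C.Hom z (a.act₀ t y)) (l : C.Hom y (a.act₀ g x)) (k : C.Hom x (a.act₀ h u)),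
      f ∈ a.I t z (a.act₀ t y) → l ∈ a.I g y (a.act₀ g x) → k ∈ a.I h x (a.act₀ h u) →
      HEq (skewMul 𝒢 C a (𝒢.mul t g) h (skewMul 𝒢 C a t g f l) k)
          (skewMul 𝒢 C a t (𝒢.mul g h) f (skewMul 𝒢 C a g h l k))

end Skew

section Algebra

/-- The underlying module of the `R`-algebra `a(C) = ⊕_{x,y ∈ C₀} _yC_x`. -/
abbrev aHom (C : RSemicat.{u, v, w} R Ob) : Type (max v w) :=
  Π₀ p : Ob × Ob, C.Hom p.1 p.2

/-- The multiplication of the `R`-algebra `a(C)`: the matrix product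
induced by the composition of `C`. -/
def aMul (C : RSemicat.{u, v, w} R Ob) (F K : aHom C) : aHom C :=
  DFinsupp.sum F fun p v => DFinsupp.sum K fun q w =>
    if h : p.2 = q.1 then
      DFinsupp.single (⟨p.1, q.2⟩ : Ob × Ob) (C.comp v (cast (by rw [h]) w : C.Hom p.2 q.2))
    else 0

/-- `a(C)_g = ⊕_{x,y} _yI^g_x` as a subset of `a(C)`. -/
def aIdealSet (C : RSemicat.{u, v, w} R Ob) (a : SemicatActionData R G C) (g : G) :
    Set (aHom C) :=
  {F | ∀ p : Ob × Ob, F p ∈ a.I g p.1 p.2}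

/-- The map `a(C)_{g⁻¹} → a(C)_g` induced componentwise by `α^g`. -/
def aAct {C : RSemicat.{u, v, w} R Ob} (a : SemicatActionData R G C) (g : G)
    (F : aHom C) : aHom C :=
  DFinsupp.sum F fun p v =>
    DFinsupp.single (⟨a.act₀ g p.1, a.act₀ g p.2⟩ : Ob × Ob) (a.act g v)

/-- A multiplier `(Rm, Lm)` of the (possibly non-unital) "ring" given by a
multiplication `mul` on the subset `A` of an additive group `M`. -/
def IsMultiplierOn {M : Type*} [AddCommGroup M] (mul : M → M → M) (A : Set M)
    (Rm Lm : M → M) : Prop :=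
  (∀ a ∈ A, Rm a ∈ A) ∧ (∀ a ∈ A, Lm a ∈ A) ∧
  (∀ a ∈ A, ∀ b ∈ A, Rm (a + b) = Rm a + Rm b) ∧
  (∀ a ∈ A, ∀ b ∈ A, Lm (a + b) = Lm a + Lm b) ∧
  (∀ a ∈ A, ∀ b ∈ A, Rm (mul a b) = mul a (Rm b)) ∧
  (∀ a ∈ A, ∀ b ∈ A, Lm (mul a b) = mul (Lm a) b) ∧
  (∀ a ∈ A, ∀ b ∈ A, mul (Rm a) b = mul a (Lm b))

/-- `(L, R)`-associativity: for any two multipliers `(Rm, Lm)` and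
`(Rm', Lm')` one has `Rm ∘ Lm' = Lm' ∘ Rm`. -/
def IsLRAssocOn {M : Type*} [AddCommGroup M] (mul : M → M → M) (A : Set M) : Prop :=
  ∀ Rm Lm Rm' Lm', IsMultiplierOn mul A Rm Lm → IsMultiplierOn mul A Rm' Lm' →
    ∀ a ∈ A, Rm (Lm' a) = Lm' (Rm a)

/-- `J` is a two-sided ideal of the "ring" `I ⊆ M` (with multiplication `mul`). -/
def IsRingIdealPair {M : Type*} [AddCommGroup M] (mul : M → M → M) (J I : Set M) : Prop :=
  J ⊆ I ∧ (0 : M) ∈ J ∧ (∀ a ∈ J, ∀ b ∈ J, a + b ∈ J) ∧ (∀ a ∈ J, -a ∈ J) ∧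
  (∀ a ∈ I, ∀ b ∈ J, mul a b ∈ J ∧ mul b a ∈ J)

/-- A partial action of a groupoid `𝒢` on the (possibly non-unital) ring
`(M, mul)`: ideals `D (r g) ⊴ M`, `D g ⊴ D (r g)` and ring isomorphisms
`act g : D g⁻¹ → D g` satisfying the partial action axioms. -/
def IsRingPartialAction {M : Type*} [AddCommGroup M] (𝒢 : AlgGroupoid G)
    (mul : M → M → M) (D : G → Set M) (act : G → M → M) : Prop :=
  (∀ g, IsRingIdealPair mul (D (𝒢.r g)) Set.univ) ∧
  (∀ g, IsRingIdealPair mul (D g) (D (𝒢.r g))) ∧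
  (∀ g, ∀ x ∈ D (𝒢.inv g), act g x ∈ D g) ∧
  (∀ g, ∀ x ∈ D (𝒢.inv g), act (𝒢.inv g) (act g x) = x) ∧
  (∀ g, ∀ y ∈ D g, ∃ x ∈ D (𝒢.inv g), act g x = y) ∧
  (∀ g, ∀ x ∈ D (𝒢.inv g), ∀ y ∈ D (𝒢.inv g), act g (x + y) = act g x + act g y) ∧
  (∀ g, ∀ x ∈ D (𝒢.inv g), ∀ y ∈ D (𝒢.inv g), act g (mul x y) = mul (act g x) (act g y)) ∧
  (∀ e ∈ 𝒢.units, ∀ x ∈ D e, act e x = x) ∧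
  (∀ g h, 𝒢.comp g h → ∀ x, x ∈ D (𝒢.inv g) → x ∈ D h →
      act (𝒢.inv h) x ∈ D (𝒢.inv (𝒢.mul g h))) ∧
  (∀ g h, 𝒢.comp g h → ∀ x ∈ D (𝒢.inv h), act h x ∈ D (𝒢.inv g) →
      act g (act h x) = act (𝒢.mul g h) x)

/-- A partial ring action is global when `α_g ∘ α_h = α_{gh}` for every
composable pair. -/
def RingActionIsGlobal {M : Type*} (𝒢 : AlgGroupoid G)
    (D : G → Set M) (act : G → M → M) : Prop :=
  ∀ g h, 𝒢.comp g h →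
    (∀ x, x ∈ D (𝒢.inv (𝒢.mul g h)) ↔ x ∈ D (𝒢.inv h) ∧ act h x ∈ D (𝒢.inv g)) ∧
    (∀ x ∈ D (𝒢.inv (𝒢.mul g h)), act g (act h x) = act (𝒢.mul g h) x)

end Algebra
section Globalization

variable {Ob' : Type v'}

/-- Membership in the image ideal `φ(I)` (inside the semicategory `D`),
with the convention that its components vanish away from the image of `ι`. -/
def ImageMem (C : RSemicat.{u, v, w} R Ob) (D : RSemicat.{u, v', w'} R Ob') (ι : Ob → Ob')
    (I : ∀ y x : Ob, Submodule R (C.Hom y x))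
    (φ : ∀ {y x : Ob}, C.Hom y x → D.Hom (ι y) (ι x))
    {z x' : Ob'} (k : D.Hom z x') : Prop :=
  k = 0 ∨ ∃ (y x : Ob) (f : C.Hom y x), f ∈ I y x ∧ ι y = z ∧ ι x = x' ∧ HEq (φ f) k

/-- The data of a (candidate) globalization of a partial action on `C`:
a global action on the semicategory `D`, an inclusion `ι : C₀ → D₀` of object
sets, and semifunctors `φ_e : I^e → J^e` acting as `ι` on objects. -/
structure GlobalizationData (R : Type u) [CommRing R] (G : Type u₂) {Ob : Type v}
    {Ob' : Type v'} (C : RSemicat.{u, v, w} R Ob) (D : RSemicat.{u, v', w'} R Ob') where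
  b : SemicatActionData R G D
  ι : Ob → Ob'
  φ : ∀ (e : G) {y x : Ob}, C.Hom y x → D.Hom (ι y) (ι x)

/-- `(D, β, (φ_e))` is a globalization of the partial groupoid action
`(C, α)` (Definition 3.2 of the paper). -/
def IsGlobalization (𝒢 : AlgGroupoid G) (C : RSemicat.{u, v, w} R Ob)
    (a : SemicatActionData R G C) (D : RSemicat.{u, v', w'} R Ob')
    (gd : GlobalizationData R G C D) : Prop :=
  Function.Injective gd.ι ∧
  -- β is a global action of 𝒢 on D
  IsSemicatPartialAction 𝒢 D gd.b ∧
  SemicatActionIsGlobal 𝒢 D gd.b ∧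
  -- (i) the object-level action β₀ is a globalization of α₀
  (∀ e ∈ 𝒢.units, ∀ x : Ob, x ∈ a.D₀ e ↔ gd.ι x ∈ gd.b.D₀ e) ∧
  (∀ g : G, ∀ x : Ob, x ∈ a.D₀ g ↔
      (gd.ι x ∈ gd.b.D₀ (𝒢.r g) ∧
        ∃ x' : Ob, gd.ι x' ∈ gd.b.D₀ (𝒢.d g) ∧ gd.b.act₀ g (gd.ι x') = gd.ι x)) ∧
  (∀ g : G, ∀ x ∈ a.D₀ (𝒢.inv g), gd.ι (a.act₀ g x) = gd.b.act₀ g (gd.ι x)) ∧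
  -- (ii) each φ_e is a faithful semifunctor with φ_e(I^e) ⊴ J^e
  (∀ e ∈ 𝒢.units,
    (∀ (y x : Ob) (f f' : C.Hom y x), f ∈ a.I e y x → f' ∈ a.I e y x →
        gd.φ e (f + f') = gd.φ e f + gd.φ e f') ∧
    (∀ (y x : Ob) (c : R) (f : C.Hom y x), f ∈ a.I e y x →
        gd.φ e (c • f) = c • gd.φ e f) ∧
    (∀ (z y x : Ob) (f : C.Hom z y) (f' : C.Hom y x), f ∈ a.I e z y → f' ∈ a.I e y x →
        gd.φ e (C.comp f f') = D.comp (gd.φ e f) (gd.φ e f')) ∧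
    (∀ (y x : Ob) (f f' : C.Hom y x), f ∈ a.I e y x → f' ∈ a.I e y x →
        gd.φ e f = gd.φ e f' → f = f') ∧
    (∀ (y x : Ob) (f : C.Hom y x), f ∈ a.I e y x →
        gd.φ e f ∈ gd.b.I e (gd.ι y) (gd.ι x))) ∧
  (∀ e ∈ 𝒢.units, ∀ (w z x' : Ob') (u : D.Hom w z) (k : D.Hom z x'),
      u ∈ gd.b.I e w z → ImageMem C D gd.ι (a.I e) (gd.φ e) k →
      ImageMem C D gd.ι (a.I e) (gd.φ e) (D.comp u k)) ∧
  (∀ e ∈ 𝒢.units, ∀ (z x' w : Ob') (k : D.Hom z x') (u : D.Hom x' w),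
      ImageMem C D gd.ι (a.I e) (gd.φ e) k → u ∈ gd.b.I e x' w →
      ImageMem C D gd.ι (a.I e) (gd.φ e) (D.comp k u)) ∧
  -- (iii) φ_{r g}(_yI^g_x) = φ_{r g}(_yI^{r g}_x) ∩ β^g(φ_{d g}(_{g⁻¹y}I^{d g}_{g⁻¹x}))
  (∀ g : G, ∀ y ∈ a.D₀ g, ∀ x ∈ a.D₀ g, ∀ k : D.Hom (gd.ι y) (gd.ι x),
      (∃ f ∈ a.I g y x, gd.φ (𝒢.r g) f = k) ↔
        ((∃ f ∈ a.I (𝒢.r g) y x, gd.φ (𝒢.r g) f = k) ∧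
          ∃ f' : C.Hom (a.act₀ (𝒢.inv g) y) (a.act₀ (𝒢.inv g) x),
            f' ∈ a.I (𝒢.d g) (a.act₀ (𝒢.inv g) y) (a.act₀ (𝒢.inv g) x) ∧
            HEq (gd.b.act g (gd.φ (𝒢.d g) f')) k)) ∧
  -- (iv) β^g ∘ φ_{d g} = φ_{r g} ∘ α^g on I^{g⁻¹}
  (∀ (g : G) (y x : Ob) (f : C.Hom y x), f ∈ a.I (𝒢.inv g) y x →
      HEq (gd.b.act g (gd.φ (𝒢.d g) f)) (gd.φ (𝒢.r g) (a.act g f))) ∧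
  -- (v) _yJ^g_x = Σ_{r h = r g} β^h(φ_{d h}(_{h⁻¹y}I^{d h}_{h⁻¹x}))
  (∀ (g : G) (y x : Ob'), gd.b.I g y x = Submodule.span R
      {m : D.Hom y x | ∃ h : G, 𝒢.r h = 𝒢.r g ∧
        ∃ (y' x' : Ob) (f : C.Hom y' x'), f ∈ a.I (𝒢.d h) y' x' ∧
          gd.ι y' = gd.b.act₀ (𝒢.inv h) y ∧ gd.ι x' = gd.b.act₀ (𝒢.inv h) x ∧
          HEq (gd.b.act h (gd.φ (𝒢.d h) f)) m})

/-- The ring homomorphism `ψ_e : a(C) → a(D)` induced componentwise by a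
semifunctor `φ_e`. -/
def aPhiRing {C : RSemicat.{u, v, w} R Ob} {D : RSemicat.{u, v', w'} R Ob'}
    (ι : Ob → Ob') (φ : ∀ (e : G) {y x : Ob}, C.Hom y x → D.Hom (ι y) (ι x))
    (e : G) (F : aHom C) : aHom D :=
  DFinsupp.sum F fun p v => DFinsupp.single (⟨ι p.1, ι p.2⟩ : Ob' × Ob') (φ e v)

/-- A global action `(DN, actN)` of `𝒢` on the ring `(N, mulN)` is a
globalization of the partial ring action `(DM, actM)` of `𝒢` on `(M, mulM)`
via the ring monomorphisms `ψ_e` (Definition 3.1 of the paper). -/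
def IsRingGlobalization {M N : Type*} [AddCommGroup M] [AddCommGroup N]
    (𝒢 : AlgGroupoid G)
    (mulM : M → M → M) (DM : G → Set M) (actM : G → M → M)
    (mulN : N → N → N) (DN : G → Set N) (actN : G → N → N)
    (ψ : G → M → N) : Prop :=
  IsRingPartialAction 𝒢 mulN DN actN ∧
  RingActionIsGlobal 𝒢 DN actN ∧
  (∀ e ∈ 𝒢.units,
    (∀ x ∈ DM e, ψ e x ∈ DN e) ∧
    (∀ x ∈ DM e, ∀ y ∈ DM e, ψ e (x + y) = ψ e x + ψ e y) ∧
    (∀ x ∈ DM e, ∀ y ∈ DM e, ψ e (mulM x y) = mulN (ψ e x) (ψ e y)) ∧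
    (∀ x ∈ DM e, ∀ y ∈ DM e, ψ e x = ψ e y → x = y) ∧
    -- (i) ψ_e(A_e) is an ideal of B_e
    IsRingIdealPair mulN (ψ e '' DM e) (DN e)) ∧
  -- (ii)
  (∀ g : G, ψ (𝒢.r g) '' DM g =
      (ψ (𝒢.r g) '' DM (𝒢.r g)) ∩ (actN g '' (ψ (𝒢.d g) '' DM (𝒢.d g)))) ∧
  -- (iii)
  (∀ g : G, ∀ x ∈ DM (𝒢.inv g), actN g (ψ (𝒢.d g) x) = ψ (𝒢.r g) (actM g x)) ∧
  -- (iv)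
  (∀ g : G, ∀ k : N, k ∈ DN g ↔ k ∈ AddSubgroup.closure
      {m : N | ∃ h : G, 𝒢.r h = 𝒢.r g ∧ ∃ F ∈ DM (𝒢.d h), m = actN h (ψ (𝒢.d h) F)})

end Globalization

section Orbits

/-- The orbit relation induced by a partial action of a groupoid: `e ∼ f`
iff `f = g e` for some morphism `g` with `e` in the domain of `α_g`. -/
def orbRel {Y : Type*} (𝒢 : AlgGroupoid G) (D : G → Set Y) (act : G → Y → Y)
    (e f : Y) : Prop :=
  ∃ g : G, e ∈ D (𝒢.inv g) ∧ act g e = f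

/-- `C(ρ,τ)_g = ⊕_{x ∈ ρ, y ∈ τ} _yI^g_x`, realized inside `a(C)`. -/
def CSet (C : RSemicat.{u, v, w} R Ob) (a : SemicatActionData R G C)
    (ρ τ : Set Ob) (g : G) : Set (aHom C) :=
  {F | ∀ p : Ob × Ob, F p ∈ a.I g p.1 p.2 ∧ (F p ≠ 0 → p.1 ∈ τ ∧ p.2 ∈ ρ)}

end Orbits
section SkewCatAlgebra

/-- The morphism module `_y(C∗_α𝒢)_x = ⊕_{g} _yI^g_{gx}` of the partial skew
groupoid semicategory (realized as a direct sum over all of `G`; the genuine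
morphisms are those supported on `𝒢^x` with components in `I^g`). -/
abbrev SkewHomT (C : RSemicat.{u, v, w} R Ob) (a : SemicatActionData R G C)
    (y x : Ob) : Type (max u₂ w) :=
  Π₀ g : G, C.Hom y (a.act₀ g x)

/-- Composition in the partial skew groupoid semicategory `C∗_α𝒢`. -/
def skewHomMul (𝒢 : AlgGroupoid G) (C : RSemicat.{u, v, w} R Ob)
    (a : SemicatActionData R G C) {z y x : Ob}
    (F : SkewHomT C a z y) (K : SkewHomT C a y x) : SkewHomT C a z x :=
  DFinsupp.sum F fun t f => DFinsupp.sum K fun g l =>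
    DFinsupp.single (𝒢.mul t g) (skewMul 𝒢 C a t g f l)

/-- The underlying module of the algebra `a(C∗_α𝒢)`. -/
abbrev aSkewT (C : RSemicat.{u, v, w} R Ob) (a : SemicatActionData R G C) :
    Type (max v u₂ w) :=
  Π₀ p : Ob × Ob, SkewHomT C a p.1 p.2

/-- The multiplication of the algebra `a(C∗_α𝒢)`. -/
def aSkewMul (𝒢 : AlgGroupoid G) (C : RSemicat.{u, v, w} R Ob)
    (a : SemicatActionData R G C) (F K : aSkewT C a) : aSkewT C a :=
  DFinsupp.sum F fun p u => DFinsupp.sum K fun q v =>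
    if h : p.2 = q.1 then
      DFinsupp.single (⟨p.1, q.2⟩ : Ob × Ob)
        (skewHomMul 𝒢 C a u (cast (by rw [h]) v : SkewHomT C a p.2 q.2))
    else 0

/-- The set of genuine elements of `a(C∗_α𝒢)` inside `aSkewT`. -/
def aSkewSet (𝒢 : AlgGroupoid G) (C : RSemicat.{u, v, w} R Ob)
    (a : SemicatActionData R G C) : Set (aSkewT C a) :=
  {F | ∀ (p : Ob × Ob) (g : G), F p g ∈ a.I g p.1 (a.act₀ g p.2) ∧
    (p.2 ∉ a.D₀ (𝒢.inv g) → F p g = 0)}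

/-- The underlying module of the partial skew groupoid ring
`a(C)∗_α𝒢 = ⊕_g a(C)_g δ_g`. -/
abbrev sRingT (G : Type u₂) (C : RSemicat.{u, v, w} R Ob) : Type (max v u₂ w) :=
  Π₀ _g : G, aHom C

/-- The multiplication of the partial skew groupoid ring `a(C)∗_α𝒢`:
`(a_g δ_g)(b_h δ_h) = α_g(α_{g⁻¹}(a_g) b_h) δ_{gh}` when `(g,h)` is
composable, and `0` otherwise. -/
def sRingMul (𝒢 : AlgGroupoid G) (C : RSemicat.{u, v, w} R Ob)
    (a : SemicatActionData R G C) (F K : sRingT G C) : sRingT G C :=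
  DFinsupp.sum F fun g ag => DFinsupp.sum K fun h bh =>
    if 𝒢.comp g h then
      DFinsupp.single (𝒢.mul g h) (aAct a g (aMul C (aAct a (𝒢.inv g) ag) bh))
    else 0

/-- The set of genuine elements of `a(C)∗_α𝒢` inside `sRingT`. -/
def sRingSet (C : RSemicat.{u, v, w} R Ob) (a : SemicatActionData R G C) :
    Set (sRingT G C) :=
  {K | ∀ (g : G) (p : Ob × Ob), K g p ∈ a.I g p.1 p.2}

/-- The isomorphism `a(C∗_α𝒢) → a(C)∗_α𝒢`, `f_g ↦ f_g δ_g`. -/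
def aPhi (C : RSemicat.{u, v, w} R Ob) (a : SemicatActionData R G C)
    (F : aSkewT C a) : sRingT G C :=
  DFinsupp.sum F fun p u => DFinsupp.sum u fun g f =>
    DFinsupp.single g (DFinsupp.single (⟨p.1, a.act₀ g p.2⟩ : Ob × Ob) f)

end SkewCatAlgebra

section Graded

/-- A `𝒢`-grading of an `R`-semicategory `B`: decompositions
`_yB_x = ⊕_{g} _yB_x^g` such that `_zB_y^t ⬝ _yB_x^s ⊆ _zB_x^{ts}` when
`d t = r s` and `_zB_y^t ⬝ _yB_x^s = 0` otherwise. -/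
def IsGrading (𝒢 : AlgGroupoid G) (B : RSemicat.{u, v, w} R Ob)
    (deco : ∀ y x : Ob, G → Submodule R (B.Hom y x)) : Prop :=
  (∀ y x : Ob, DirectSum.IsInternal fun g : G => deco y x g) ∧
  (∀ (z y x : Ob) (t s : G), 𝒢.comp t s → ∀ u ∈ deco z y t, ∀ v ∈ deco y x s,
      B.comp u v ∈ deco z x (𝒢.mul t s)) ∧
  (∀ (z y x : Ob) (t s : G), ¬ 𝒢.comp t s → ∀ u ∈ deco z y t, ∀ v ∈ deco y x s,
      B.comp u v = 0)

/-- The morphism submodule `_{(y,t)}(B#𝒢)_{(x,s)}` of the smash product: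
`_yB_x^{t⁻¹ s}` when `r t = r s`, and `0` otherwise. -/
def smashMod (𝒢 : AlgGroupoid G) (B : RSemicat.{u, v, w} R Ob)
    (deco : ∀ y x : Ob, G → Submodule R (B.Hom y x))
    (yt xs : Ob × G) : Submodule R (B.Hom yt.1 xs.1) :=
  if 𝒢.r yt.2 = 𝒢.r xs.2 then deco yt.1 xs.1 (𝒢.mul (𝒢.inv yt.2) xs.2) else ⊥

/-- The smash product `R`-semicategory `B#𝒢`. -/
def Smash (𝒢 : AlgGroupoid G) (B : RSemicat.{u, v, w} R Ob)
    (deco : ∀ y x : Ob, G → Submodule R (B.Hom y x))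
    (hgr : IsGrading 𝒢 B deco) :
    RSemicat.{u, max v u₂, w} R (Ob × G) where
  Hom yt xs := ↥(smashMod 𝒢 B deco yt xs)
  comp {z y x} f g := ⟨B.comp f.1 g.1, by
    obtain ⟨fv, hf⟩ := f
    obtain ⟨gv, hg⟩ := g
    show B.comp fv gv ∈ smashMod 𝒢 B deco z x
    unfold smashMod at hf hg ⊢
    by_cases h1 : 𝒢.r z.2 = 𝒢.r y.2
    · by_cases h2 : 𝒢.r y.2 = 𝒢.r x.2
      · rw [if_pos h1] at hf
        rw [if_pos h2] at hg
        rw [if_pos (h1.trans h2)]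
        have c1 : 𝒢.comp (𝒢.inv z.2) y.2 :=
          (𝒢.comp_iff _ _).2 (by rw [𝒢.inv_inv']; exact h1)
        have c2 : 𝒢.comp (𝒢.inv y.2) x.2 :=
          (𝒢.comp_iff _ _).2 (by rw [𝒢.inv_inv']; exact h2)
        have ccy : 𝒢.comp y.2 (𝒢.inv y.2) := 𝒢.comp_inv_right y.2
        have ccyc : 𝒢.comp y.2 (𝒢.mul (𝒢.inv y.2) x.2) :=
          𝒢.comp_mul_right y.2 (𝒢.inv y.2) x.2 ccy c2
        have hcomp : 𝒢.comp (𝒢.mul (𝒢.inv z.2) y.2) (𝒢.mul (𝒢.inv y.2) x.2) :=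
          𝒢.comp_mul_left (𝒢.inv z.2) y.2 (𝒢.mul (𝒢.inv y.2) x.2) c1 ccyc
        have hmem := hgr.2.1 z.1 y.1 x.1 (𝒢.mul (𝒢.inv z.2) y.2)
          (𝒢.mul (𝒢.inv y.2) x.2) hcomp fv hf gv hg
        have h2' : 𝒢.mul y.2 (𝒢.inv y.2) = 𝒢.mul x.2 (𝒢.inv x.2) := h2
        have s5 : 𝒢.mul x.2 (𝒢.mul (𝒢.inv x.2) x.2) = x.2 := by
          have h5 := 𝒢.inv_mul_cancel' (𝒢.inv x.2) x.2 (𝒢.comp_inv_left x.2)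
          rwa [𝒢.inv_inv'] at h5
        have hidx : 𝒢.mul (𝒢.mul (𝒢.inv z.2) y.2) (𝒢.mul (𝒢.inv y.2) x.2) =
            𝒢.mul (𝒢.inv z.2) x.2 := by
          rw [𝒢.mul_assoc' (𝒢.inv z.2) y.2 (𝒢.mul (𝒢.inv y.2) x.2) c1 ccyc,
            ← 𝒢.mul_assoc' y.2 (𝒢.inv y.2) x.2 ccy c2, h2',
            𝒢.mul_assoc' x.2 (𝒢.inv x.2) x.2 (𝒢.comp_inv_right x.2) (𝒢.comp_inv_left x.2),
            s5]
        rw [hidx] at hmem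
        exact hmem
      · rw [if_neg h2] at hg
        have hg0 : gv = 0 := by simpa using hg
        rw [hg0, B.comp_zero_right]
        exact Submodule.zero_mem _
    · rw [if_neg h1] at hf
      have hf0 : fv = 0 := by simpa using hf
      rw [hf0, B.comp_zero_left]
      exact Submodule.zero_mem _⟩
  comp_assoc f g h := Subtype.ext (B.comp_assoc f.1 g.1 h.1)
  comp_add_left f f' g := Subtype.ext (B.comp_add_left f.1 f'.1 g.1)
  comp_add_right f g g' := Subtype.ext (B.comp_add_right f.1 g.1 g'.1)
  comp_smul_left c f g := Subtype.ext (B.comp_smul_left c f.1 g.1)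
  comp_smul_right c f g := Subtype.ext (B.comp_smul_right c f.1 g.1)

/-- The object part of the global action of `𝒢` on `B#𝒢`:
`α₀^g (x, s) = (x, g s)`. -/
def smashAct₀ (𝒢 : AlgGroupoid G) (g : G) (p : Ob × G) : Ob × G :=
  (p.1, 𝒢.mul g p.2)

/-- The global action of `𝒢` on the smash product `B#𝒢` (domains
`B₀ × 𝒢(-, r g)`, `α₀^g(x,s) = (x, gs)`, ideals `_{(y,t)}I^g_{(x,s)}`
given by `_yB_x^{t⁻¹s}` when `r t = r s = r g` and `0` otherwise, and `α^g`
given by the identity on the underlying morphisms of `B`). -/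
def smashActionData (𝒢 : AlgGroupoid G) (B : RSemicat.{u, v, w} R Ob)
    (deco : ∀ y x : Ob, G → Submodule R (B.Hom y x))
    (hgr : IsGrading 𝒢 B deco) :
    SemicatActionData R G (Smash 𝒢 B deco hgr) where
  D₀ g := {p : Ob × G | 𝒢.r p.2 = 𝒢.r g}
  act₀ := smashAct₀ 𝒢
  I g yt xs := if 𝒢.r yt.2 = 𝒢.r g ∧ 𝒢.r xs.2 = 𝒢.r g then ⊤ else ⊥
  act g {yt xs} f :=
    if h : (f.1 : B.Hom yt.1 xs.1) ∈
        smashMod 𝒢 B deco (smashAct₀ 𝒢 g yt) (smashAct₀ 𝒢 g xs) then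
      ⟨f.1, h⟩
    else 0

end Graded

/-! The only component of `u` composable with a morphism `f` of degree `t` is the one of degree
`d t`, and there `f u = α^t(α^{t⁻¹}(f) 1^{d t}_x) = α^t(α^{t⁻¹}(f)) = α^{r t}(f) = f`, because
`α^{t⁻¹}(f) ∈ I^{t⁻¹} ⊆ I^{d t}` and `α^e` is the identity on `I^e` for `e ∈ 𝒢₀`. Dually, for
`k` of degree `s`, only the component of degree `r s` survives and
`u k = α^{r s}(α^{r s}(1^{r s}_x) k) = α^{r s}(1^{r s}_x k) = k`. -/

namespace AlgGroupoid

variable {G : Type u₂} (𝒢 : AlgGroupoid G)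

theorem mul_d (t : G) : 𝒢.mul t (𝒢.d t) = t := by
  have h := 𝒢.inv_mul_cancel' (𝒢.inv t) t (𝒢.comp_inv_left t)
  rwa [𝒢.inv_inv'] at h

theorem r_mul (s : G) : 𝒢.mul (𝒢.r s) s = s := by
  have h := 𝒢.mul_inv_cancel' s (𝒢.inv s) (𝒢.comp_inv_right s)
  rwa [𝒢.inv_inv'] at h

theorem inv_d (t : G) : 𝒢.inv (𝒢.d t) = 𝒢.d t := by
  have h := 𝒢.inv_mul' (𝒢.inv t) t (𝒢.comp_inv_left t)
  rwa [𝒢.inv_inv'] at h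

theorem d_mul_d (t : G) : 𝒢.mul (𝒢.d t) (𝒢.d t) = 𝒢.d t := by
  have hcomp : 𝒢.comp t (𝒢.d t) :=
    𝒢.comp_mul_right t (𝒢.inv t) t (𝒢.comp_inv_right t) (𝒢.comp_inv_left t)
  have h := 𝒢.mul_assoc' (𝒢.inv t) t (𝒢.d t) (𝒢.comp_inv_left t) hcomp
  rwa [𝒢.mul_d] at h

theorem d_eq_r_inv (t : G) : 𝒢.d t = 𝒢.r (𝒢.inv t) := by
  rw [r, 𝒢.inv_inv', d]

theorem d_mem_units (t : G) : 𝒢.d t ∈ 𝒢.units := ⟨t, rfl⟩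

theorem r_mem_units (t : G) : 𝒢.r t ∈ 𝒢.units :=
  ⟨𝒢.inv t, by rw [d, 𝒢.inv_inv', r]⟩

variable {𝒢}

theorem inv_of_mem_units {e : G} (he : e ∈ 𝒢.units) : 𝒢.inv e = e := by
  obtain ⟨g, rfl⟩ := he
  exact 𝒢.inv_d g

theorem d_of_mem_units {e : G} (he : e ∈ 𝒢.units) : 𝒢.d e = e := by
  obtain ⟨g, rfl⟩ := he
  rw [d, 𝒢.inv_d, 𝒢.d_mul_d]

theorem r_of_mem_units {e : G} (he : e ∈ 𝒢.units) : 𝒢.r e = e := by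
  obtain ⟨g, rfl⟩ := he
  rw [r, 𝒢.inv_d, 𝒢.d_mul_d]

theorem comp_iff_d_eq {e : G} (he : e ∈ 𝒢.units) (t : G) : 𝒢.comp t e ↔ 𝒢.d t = e := by
  rw [𝒢.comp_iff]
  show 𝒢.d t = 𝒢.r e ↔ _
  rw [r_of_mem_units he]

theorem comp_iff_eq_r {e : G} (he : e ∈ 𝒢.units) (s : G) : 𝒢.comp e s ↔ e = 𝒢.r s := by
  rw [𝒢.comp_iff]
  show 𝒢.d e = 𝒢.r s ↔ _
  rw [d_of_mem_units he]

variable (𝒢)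

theorem comp_d (t : G) : 𝒢.comp t (𝒢.d t) :=
  (comp_iff_d_eq (𝒢.d_mem_units t) t).2 rfl

theorem r_comp (s : G) : 𝒢.comp (𝒢.r s) s :=
  (comp_iff_eq_r (𝒢.r_mem_units s) s).2 rfl

end AlgGroupoid

namespace RSemicat

variable {R : Type u} [CommRing R] {Ob : Type v} (C : RSemicat.{u, v, w} R Ob)

theorem zero_heq_zero {z z' y y' : Ob} (hz : z = z') (hy : y = y') :
    (0 : C.Hom z y) ≍ (0 : C.Hom z' y') := by
  subst hz hy
  rfl

theorem cast_hom_zero {z z' y y' : Ob} (hz : z = z') (hy : y = y')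
    (h : C.Hom z y = C.Hom z' y') : cast h (0 : C.Hom z y) = 0 := by
  subst hz hy
  rfl

theorem comp_heq_comp {z z' y y' x x' : Ob} (hz : z = z') (hy : y = y') (hx : x = x')
    {f : C.Hom z y} {f' : C.Hom z' y'} {g : C.Hom y x} {g' : C.Hom y' x'}
    (hf : f ≍ f') (hg : g ≍ g') : C.comp f g ≍ C.comp f' g' := by
  subst hz hy hx hf hg
  rfl

theorem mem_of_heq (I : ∀ y x : Ob, Submodule R (C.Hom y x)) {y y' x x' : Ob}
    (hy : y = y') (hx : x = x') {f : C.Hom y x} {f' : C.Hom y' x'} (h : f' ≍ f)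
    (hf : f ∈ I y x) : f' ∈ I y' x' := by
  subst hy hx h
  exact hf

end RSemicat

theorem SemicatActionData.act_heq_act {C : RSemicat.{u, v, w} R Ob} (a : SemicatActionData R G C)
    {g g' : G} {y y' x x' : Ob} (hg : g = g') (hy : y = y') (hx : x = x')
    {f : C.Hom y x} {f' : C.Hom y' x'} (hf : f ≍ f') : a.act g f ≍ a.act g' f' := by
  subst hg hy hx hf
  rfl

namespace IsSemicatPartialAction

variable {𝒢 : AlgGroupoid G} {C : RSemicat.{u, v, w} R Ob} {a : SemicatActionData R G C}
  (hpa : IsSemicatPartialAction 𝒢 C a)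
include hpa

theorem D₀_subset_D₀_r (g : G) : a.D₀ g ⊆ a.D₀ (𝒢.r g) :=
  hpa.1.2.1 g

theorem act₀_of_mem_units {e : G} (he : e ∈ 𝒢.units) {x : Ob} (hx : x ∈ a.D₀ e) :
    a.act₀ e x = x :=
  hpa.1.2.2.2.1 e he x hx

theorem act₀_mem {g : G} {x : Ob} (hx : x ∈ a.D₀ (𝒢.inv g)) : a.act₀ g x ∈ a.D₀ g :=
  hpa.1.2.2.2.2.1 g x hx

theorem act₀_inv_act₀ {g : G} {x : Ob} (hx : x ∈ a.D₀ (𝒢.inv g)) :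
    a.act₀ (𝒢.inv g) (a.act₀ g x) = x :=
  hpa.1.2.2.2.2.2.1 g x hx

theorem act₀_act₀_inv {g : G} {x : Ob} (hx : x ∈ a.D₀ g) :
    a.act₀ g (a.act₀ (𝒢.inv g) x) = x := by
  simpa only [𝒢.inv_inv'] using hpa.act₀_inv_act₀ (g := 𝒢.inv g) (by rwa [𝒢.inv_inv'])

theorem mem_D₀_d {t : G} {x : Ob} (hx : x ∈ a.D₀ (𝒢.inv t)) : x ∈ a.D₀ (𝒢.d t) :=
  𝒢.d_eq_r_inv t ▸ hpa.D₀_subset_D₀_r _ hx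

theorem eq_zero_of_mem_I {g : G} {y x : Ob} (h : ¬(y ∈ a.D₀ g ∧ x ∈ a.D₀ g))
    {f : C.Hom y x} (hf : f ∈ a.I g y x) : f = 0 := by
  rwa [hpa.2.1 g y x h, Submodule.mem_bot] at hf

theorem I_le_I_r (g : G) (y x : Ob) : a.I g y x ≤ a.I (𝒢.r g) y x :=
  (hpa.2.2.1 g).1 y x

theorem act_mem {g : G} {y x : Ob} {f : C.Hom y x} (hf : f ∈ a.I (𝒢.inv g) y x) :
    a.act g f ∈ a.I g (a.act₀ g y) (a.act₀ g x) :=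
  hpa.2.2.2.2.1 g y x f hf

theorem act_zero (g : G) (y x : Ob) : a.act g (0 : C.Hom y x) = 0 := by
  have h := hpa.2.2.2.2.2.1 g y x 0 0 (Submodule.zero_mem _) (Submodule.zero_mem _)
  rwa [add_zero, left_eq_add] at h

theorem act_heq_self {e : G} (he : e ∈ 𝒢.units) {y x : Ob} {f : C.Hom y x}
    (hf : f ∈ a.I e y x) : a.act e f ≍ f :=
  hpa.2.2.2.2.2.2.2.2.2.2.1 e he y x f hf

theorem act_act_heq {g h : G} (hgh : 𝒢.comp g h) {y x : Ob} {f : C.Hom y x}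
    (hf : f ∈ a.I (𝒢.inv h) y x) (hf' : a.act h f ∈ a.I (𝒢.inv g) (a.act₀ h y) (a.act₀ h x)) :
    a.act g (a.act h f) ≍ a.act (𝒢.mul g h) f :=
  hpa.2.2.2.2.2.2.2.2.2.2.2.2 g h hgh y x f hf hf'

end IsSemicatPartialAction

section SkewMul

variable {𝒢 : AlgGroupoid G} {C : RSemicat.{u, v, w} R Ob} {a : SemicatActionData R G C}

theorem skewMul_of_not_comp {t g : G} (h : ¬𝒢.comp t g) {z y x : Ob}
    (f : C.Hom z (a.act₀ t y)) (l : C.Hom y (a.act₀ g x)) : skewMul 𝒢 C a t g f l = 0 :=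
  dif_neg fun hc => h hc.1

theorem skewMul_heq {t g : G} {z y x : Ob} {f : C.Hom z (a.act₀ t y)} {l : C.Hom y (a.act₀ g x)}
    (h : 𝒢.comp t g ∧ x ∈ a.D₀ (𝒢.inv (𝒢.mul t g)) ∧
      a.act₀ (𝒢.inv t) (a.act₀ t y) = y ∧ a.act₀ t (a.act₀ (𝒢.inv t) z) = z ∧
      a.act₀ t (a.act₀ g x) = a.act₀ (𝒢.mul t g) x)
    {φ : C.Hom (a.act₀ (𝒢.inv t) z) y} (hφ : φ ≍ a.act (𝒢.inv t) f) :
    skewMul 𝒢 C a t g f l ≍ a.act t (C.comp φ l) := by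
  rw [skewMul, dif_pos h, eq_of_heq ((cast_heq _ _).trans hφ.symm)]
  exact cast_heq _ _

variable (hpa : IsSemicatPartialAction 𝒢 C a)
include hpa

theorem skewMul_zero_left (t g : G) {z y x : Ob} (l : C.Hom y (a.act₀ g x)) :
    skewMul 𝒢 C a t g (0 : C.Hom z (a.act₀ t y)) l = 0 := by
  unfold skewMul
  split_ifs with h
  · rw [hpa.act_zero, C.cast_hom_zero rfl h.2.2.1, C.comp_zero_left, hpa.act_zero]
    exact C.cast_hom_zero h.2.2.2.1 h.2.2.2.2 _
  · rfl

theorem skewMul_zero_right (t g : G) {z y x : Ob} (f : C.Hom z (a.act₀ t y)) :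
    skewMul 𝒢 C a t g f (0 : C.Hom y (a.act₀ g x)) = 0 := by
  unfold skewMul
  split_ifs with h
  · rw [C.comp_zero_right, hpa.act_zero]
    exact C.cast_hom_zero h.2.2.2.1 h.2.2.2.2 _
  · rfl

theorem skewMul_d_heq {t : G} {z x : Ob} (hx : x ∈ a.D₀ (𝒢.inv t))
    {f : C.Hom z (a.act₀ t x)} (hf : f ∈ a.I t z (a.act₀ t x)) {v : C.Hom x x}
    (hv : ∀ (y : Ob) (k : C.Hom y x), k ∈ a.I (𝒢.d t) y x → C.comp k v = k)
    {u : C.Hom x (a.act₀ (𝒢.d t) x)} (hu : u ≍ v) : skewMul 𝒢 C a t (𝒢.d t) f u ≍ f := by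
  by_cases hz : z ∈ a.D₀ t
  swap
  · obtain rfl := hpa.eq_zero_of_mem_I (fun h => hz h.1) hf
    rw [skewMul_zero_left hpa]
    exact C.zero_heq_zero rfl (by rw [𝒢.mul_d])
  have hdx : a.act₀ (𝒢.d t) x = x := hpa.act₀_of_mem_units (𝒢.d_mem_units t) (hpa.mem_D₀_d hx)
  have hcond : 𝒢.comp t (𝒢.d t) ∧ x ∈ a.D₀ (𝒢.inv (𝒢.mul t (𝒢.d t))) ∧
      a.act₀ (𝒢.inv t) (a.act₀ t x) = x ∧ a.act₀ t (a.act₀ (𝒢.inv t) z) = z ∧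
      a.act₀ t (a.act₀ (𝒢.d t) x) = a.act₀ (𝒢.mul t (𝒢.d t)) x :=
    ⟨𝒢.comp_d t, by rwa [𝒢.mul_d], hpa.act₀_inv_act₀ hx, hpa.act₀_act₀_inv hz,
      by rw [hdx, 𝒢.mul_d]⟩
  have hf_inv : f ∈ a.I (𝒢.inv (𝒢.inv t)) z (a.act₀ t x) := by rwa [𝒢.inv_inv']
  have hf' := hpa.act_mem hf_inv
  obtain ⟨φ, hφ⟩ : ∃ φ : C.Hom (a.act₀ (𝒢.inv t) z) x, φ ≍ a.act (𝒢.inv t) f :=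
    ⟨_, cast_heq (by rw [hcond.2.2.1]) _⟩
  have hφv : C.comp φ v = φ := by
    refine hv _ φ (𝒢.d_eq_r_inv t ▸ hpa.I_le_I_r _ _ _ ?_)
    exact C.mem_of_heq _ rfl hcond.2.2.1 hφ hf'
  refine (skewMul_heq hcond hφ).trans ?_
  refine (a.act_heq_act rfl rfl hdx
    ((C.comp_heq_comp rfl rfl hdx .rfl hu).trans (heq_of_eq hφv))).trans ?_
  refine (a.act_heq_act rfl rfl hcond.2.2.1.symm hφ).trans ?_
  exact (hpa.act_act_heq (𝒢.comp_inv_right t) hf_inv hf').trans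
    (hpa.act_heq_self (𝒢.r_mem_units t) (hpa.I_le_I_r t _ _ hf))

theorem skewMul_r_heq {s : G} {z x : Ob} (hz : z ∈ a.D₀ (𝒢.inv s)) (hx : x ∈ a.D₀ s)
    {k : C.Hom x (a.act₀ s z)} (hk : k ∈ a.I s x (a.act₀ s z)) {v : C.Hom x x}
    (hvI : v ∈ a.I (𝒢.r s) x x) (hv : C.IsLeftLocalIdentity (a.I (𝒢.r s)) x v)
    {u : C.Hom x (a.act₀ (𝒢.r s) x)} (hu : u ≍ v) : skewMul 𝒢 C a (𝒢.r s) s u k ≍ k := by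
  have he := 𝒢.r_mem_units s
  have hinv : 𝒢.inv (𝒢.r s) = 𝒢.r s := AlgGroupoid.inv_of_mem_units he
  have hrx : a.act₀ (𝒢.r s) x = x := hpa.act₀_of_mem_units he (hpa.D₀_subset_D₀_r s hx)
  have hrsz : a.act₀ (𝒢.r s) (a.act₀ s z) = a.act₀ s z :=
    hpa.act₀_of_mem_units he (hpa.D₀_subset_D₀_r s (hpa.act₀_mem hz))
  have hrinvx : a.act₀ (𝒢.inv (𝒢.r s)) x = x := by rw [hinv, hrx]
  have hcond : 𝒢.comp (𝒢.r s) s ∧ z ∈ a.D₀ (𝒢.inv (𝒢.mul (𝒢.r s) s)) ∧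
      a.act₀ (𝒢.inv (𝒢.r s)) (a.act₀ (𝒢.r s) x) = x ∧
      a.act₀ (𝒢.r s) (a.act₀ (𝒢.inv (𝒢.r s)) x) = x ∧
      a.act₀ (𝒢.r s) (a.act₀ s z) = a.act₀ (𝒢.mul (𝒢.r s) s) z :=
    ⟨𝒢.r_comp s, by rwa [𝒢.r_mul], by rw [hrx, hrinvx], by rw [hrinvx, hrx],
      by rw [hrsz, 𝒢.r_mul]⟩
  obtain ⟨φ, hφ⟩ : ∃ φ : C.Hom (a.act₀ (𝒢.inv (𝒢.r s)) x) x, φ ≍ a.act (𝒢.inv (𝒢.r s)) u :=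
    ⟨_, cast_heq (by rw [hcond.2.2.1]) _⟩
  have hφv : φ ≍ v := hφ.trans ((a.act_heq_act hinv rfl hrx hu).trans (hpa.act_heq_self he hvI))
  have hkr := hpa.I_le_I_r s _ _ hk
  refine (skewMul_heq hcond hφ).trans ?_
  refine (a.act_heq_act rfl hrinvx rfl
    ((C.comp_heq_comp hrinvx rfl rfl hφv .rfl).trans (heq_of_eq (hv _ k hkr)))).trans ?_
  exact hpa.act_heq_self he hkr

end SkewMul

section LocalUnit

variable {𝒢 : AlgGroupoid G} {C : RSemicat.{u, v, w} R Ob} {a : SemicatActionData R G C}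

/-- `Σ_{e ∈ 𝒢₀ ∩ 𝒢^x} 1^e_x`, as its family of components indexed by all of `G`. -/
def localUnit (hpa : IsSemicatPartialAction 𝒢 C a)
    (hloc : ∀ (x : Ob) (e : G), e ∈ 𝒢.units → x ∈ a.D₀ (𝒢.inv e) →
      ∃ u ∈ a.I e x x, C.IsLocalIdentity (a.I e) x u)
    (x : Ob) (e : G) : C.Hom x (a.act₀ e x) :=
  if h : e ∈ 𝒢.units ∧ x ∈ a.D₀ (𝒢.inv e) then
    cast (by rw [hpa.act₀_of_mem_units h.1 (AlgGroupoid.inv_of_mem_units h.1 ▸ h.2)])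
      (hloc x e h.1 h.2).choose
  else 0

theorem localUnit_heq {hpa : IsSemicatPartialAction 𝒢 C a}
    {hloc : ∀ (x : Ob) (e : G), e ∈ 𝒢.units → x ∈ a.D₀ (𝒢.inv e) →
      ∃ u ∈ a.I e x x, C.IsLocalIdentity (a.I e) x u}
    {x : Ob} {e : G} (he : e ∈ 𝒢.units ∧ x ∈ a.D₀ (𝒢.inv e)) :
    localUnit hpa hloc x e ≍ (hloc x e he.1 he.2).choose := by
  rw [localUnit, dif_pos he]
  exact cast_heq _ _

end LocalUnit

theorem stmt10_general {R : Type u} [CommRing R] {G : Type u₂} {Ob : Type v}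
    (𝒢 : AlgGroupoid G) (C : RSemicat.{u, v, w} R Ob) (a : SemicatActionData R G C)
    (hpa : IsSemicatPartialAction 𝒢 C a)
    (hloc : ∀ (x : Ob) (e : G), e ∈ 𝒢.units → x ∈ a.D₀ (𝒢.inv e) →
      ∃ u ∈ a.I e x x, C.IsLocalIdentity (a.I e) x u) :
    ∀ x : Ob, ∃ u : ∀ e : G, C.Hom x (a.act₀ e x),
      (∀ e : G, (e ∈ 𝒢.units ∧ x ∈ a.D₀ (𝒢.inv e)) →
        u e ∈ a.I e x (a.act₀ e x) ∧
        ∃ v ∈ a.I e x x, C.IsLocalIdentity (a.I e) x v ∧ HEq (u e) v) ∧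
      (∀ e : G, ¬(e ∈ 𝒢.units ∧ x ∈ a.D₀ (𝒢.inv e)) → u e = 0) ∧
      -- `f u = f` componentwise: the `d t`-component of `u` acts as a right
      -- identity and all other components multiply to `0`
      (∀ (t : G) (z : Ob) (f : C.Hom z (a.act₀ t x)),
        x ∈ a.D₀ (𝒢.inv t) → f ∈ a.I t z (a.act₀ t x) →
          HEq (skewMul 𝒢 C a t (𝒢.d t) f (u (𝒢.d t))) f ∧
          ∀ e : G, e ≠ 𝒢.d t → skewMul 𝒢 C a t e f (u e) = 0) ∧
      -- `u k = k` componentwise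
      (∀ (s : G) (z : Ob) (k : C.Hom x (a.act₀ s z)),
        z ∈ a.D₀ (𝒢.inv s) → k ∈ a.I s x (a.act₀ s z) →
          HEq (skewMul 𝒢 C a (𝒢.r s) s (u (𝒢.r s)) k) k ∧
          ∀ e : G, e ≠ 𝒢.r s → skewMul 𝒢 C a e s (u e) k = 0) := by
  intro x
  refine ⟨localUnit hpa hloc x, fun e he => ?_, fun e he => dif_neg he,
    fun t z f hx hf => ⟨?_, fun e hne => ?_⟩, fun s z k hz hk => ⟨?_, fun e hne => ?_⟩⟩
  · obtain ⟨hvI, hv⟩ := (hloc x e he.1 he.2).choose_spec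
    have hex := hpa.act₀_of_mem_units he.1 (AlgGroupoid.inv_of_mem_units he.1 ▸ he.2)
    exact ⟨C.mem_of_heq _ rfl hex.symm (localUnit_heq he) hvI, _, hvI, hv, localUnit_heq he⟩
  · have he : 𝒢.d t ∈ 𝒢.units ∧ x ∈ a.D₀ (𝒢.inv (𝒢.d t)) :=
      ⟨𝒢.d_mem_units t, (𝒢.inv_d t).symm ▸ hpa.mem_D₀_d hx⟩
    exact skewMul_d_heq hpa hx hf (hloc x _ he.1 he.2).choose_spec.2.2 (localUnit_heq he)
  · by_cases he : e ∈ 𝒢.units ∧ x ∈ a.D₀ (𝒢.inv e)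
    · exact skewMul_of_not_comp (fun h => hne ((AlgGroupoid.comp_iff_d_eq he.1 t).1 h).symm) _ _
    · rw [show localUnit hpa hloc x e = 0 from dif_neg he, skewMul_zero_right hpa]
  · by_cases hx : x ∈ a.D₀ s
    · have he : 𝒢.r s ∈ 𝒢.units ∧ x ∈ a.D₀ (𝒢.inv (𝒢.r s)) :=
        ⟨𝒢.r_mem_units s, (AlgGroupoid.inv_of_mem_units (𝒢.r_mem_units s)).symm ▸
          hpa.D₀_subset_D₀_r s hx⟩
      obtain ⟨hvI, hv⟩ := (hloc x _ he.1 he.2).choose_spec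
      exact skewMul_r_heq hpa hz hx hk hvI hv.1 (localUnit_heq he)
    · obtain rfl := hpa.eq_zero_of_mem_I (fun h => hx h.1) hk
      rw [skewMul_zero_right hpa]
      exact C.zero_heq_zero rfl (by rw [𝒢.r_mul])
  · by_cases he : e ∈ 𝒢.units ∧ x ∈ a.D₀ (𝒢.inv e)
    · exact skewMul_of_not_comp (fun h => hne ((AlgGroupoid.comp_iff_eq_r he.1 s).1 h)) _ _
    · rw [show localUnit hpa hloc x e = 0 from dif_neg he, skewMul_zero_left hpa]

/-- Let `α` be an associative partial action of a groupoid
`𝒢` on an `R`-semicategory `C` with `𝒢₀` finite, such that for every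
`x ∈ C₀` and `e ∈ 𝒢₀ ∩ 𝒢^x` the ideal `_xI^e_x` has a local identity.
Then `C ∗_α 𝒢` is an `R`-category: at each object `x` the morphism
`u = Σ_{e ∈ 𝒢₀ ∩ 𝒢^x} 1^e_x` (whose `e`-component is the local identity
`1^e_x`) satisfies `f u = f` and `u k = k` for all morphisms `f, k` of
`C ∗_α 𝒢` with target resp. source `x`. -/
theorem stmt10 {R : Type u} [CommRing R] {G : Type u₂} {Ob : Type v}
    (𝒢 : AlgGroupoid G) (C : RSemicat.{u, v, w} R Ob) (a : SemicatActionData R G C)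
    (hpa : IsSemicatPartialAction 𝒢 C a) (hassoc : SkewAssoc 𝒢 C a)
    (hfin : (𝒢.units).Finite)
    (hloc : ∀ (x : Ob) (e : G), e ∈ 𝒢.units → x ∈ a.D₀ (𝒢.inv e) →
      ∃ u ∈ a.I e x x, C.IsLocalIdentity (a.I e) x u) :
    ∀ x : Ob, ∃ u : ∀ e : G, C.Hom x (a.act₀ e x),
      (∀ e : G, (e ∈ 𝒢.units ∧ x ∈ a.D₀ (𝒢.inv e)) →
        u e ∈ a.I e x (a.act₀ e x) ∧
        ∃ v ∈ a.I e x x, C.IsLocalIdentity (a.I e) x v ∧ HEq (u e) v) ∧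
      (∀ e : G, ¬(e ∈ 𝒢.units ∧ x ∈ a.D₀ (𝒢.inv e)) → u e = 0) ∧
      -- `f u = f` componentwise: the `d t`-component of `u` acts as a right
      -- identity and all other components multiply to `0`
      (∀ (t : G) (z : Ob) (f : C.Hom z (a.act₀ t x)),
        x ∈ a.D₀ (𝒢.inv t) → f ∈ a.I t z (a.act₀ t x) →
          HEq (skewMul 𝒢 C a t (𝒢.d t) f (u (𝒢.d t))) f ∧
          ∀ e : G, e ≠ 𝒢.d t → skewMul 𝒢 C a t e f (u e) = 0) ∧
      -- `u k = k` componentwise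
      (∀ (s : G) (z : Ob) (k : C.Hom x (a.act₀ s z)),
        z ∈ a.D₀ (𝒢.inv s) → k ∈ a.I s x (a.act₀ s z) →
          HEq (skewMul 𝒢 C a (𝒢.r s) s (u (𝒢.r s)) k) k ∧
          ∀ e : G, e ≠ 𝒢.r s → skewMul 𝒢 C a e s (u e) k = 0) :=
  stmt10_general 𝒢 C a hpa hloc
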